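/- Define a map from permutations of {1,...,n} to words of length n over the alphabet {U, H, D} by: position i is U if π(i) > i and π⁻¹(i) > i, position i is D if π(i) < i and π⁻¹(i) < i, and position i is H otherwise. Then for every permutation π of {1,...,n}, the resulting word is a Motzkin path of width n and area D(π)/2, and for every Motzkin path mz of width n, the number of permutations π of {1,...,n} mapping to mz is exactly ω(mz). -/

import Mathlib

/-- Moves of a Motzkin path: Up-right, Horizontal-right, Down-right. -/
inductive Move : Type
  | U : Move
  | H : Move
  | D : Move
deriving DecidableEq

open Move

/-- The vertical step of a move. -/
def Move.step : Move → ℤ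
  | U => 1
  | H => 0
  | D => -1

/-- The height of a path after its first `i` moves. -/
def heightAt (mz : List Move) (i : ℕ) : ℤ :=
  ((mz.take i).map Move.step).sum

/-- A word over {U,H,D} is a Motzkin path if it never goes below the x-axis
and ends on the x-axis. -/
def IsMotzkin (mz : List Move) : Prop :=
  (∀ i, 0 ≤ heightAt mz i) ∧ heightAt mz mz.length = 0

/-- The area between the x-axis and the path (sum of heights at integer points). -/
def area (mz : List Move) : ℤ :=
  ∑ i ∈ Finset.range (mz.length + 1), heightAt mz i

/-- `MZ n A` is the set of Motzkin paths of width `n` and area `A`. -/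
def MZ (n A : ℕ) : Set (List Move) :=
  {mz | mz.length = n ∧ IsMotzkin mz ∧ area mz = A}

/-- The weight `ω_i` of the `i`-th move (0-indexed): it is `h_i` for U and D moves
(height after the move for U, before the move for D) and `2h_i + 1` for H moves. -/
def moveWeight (mz : List Move) (i : ℕ) : ℤ :=
  match mz[i]? with
  | some U => heightAt mz (i + 1)
  | some D => heightAt mz i
  | some H => 2 * heightAt mz i + 1
  | none => 1

/-- The weight `ω(mz)` of a Motzkin path. -/
def weight (mz : List Move) : ℤ :=
  ∏ i ∈ Finset.range mz.length, moveWeight mz i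

/-- The total displacement `D(π) = Σ_i |i - π(i)|` of a permutation. -/
def totalDisp {n : ℕ} (π : Equiv.Perm (Fin n)) : ℤ :=
  ∑ i : Fin n, |((π i : ℕ) : ℤ) - ((i : ℕ) : ℤ)|

/-- The word over {U,H,D} associated to a permutation. -/
def toPath {n : ℕ} (π : Equiv.Perm (Fin n)) : List Move :=
  (List.finRange n).map fun i : Fin n =>
    if (i : ℕ) < (π i : ℕ) ∧ (i : ℕ) < (π.symm i : ℕ) then U
    else if (π i : ℕ) < (i : ℕ) ∧ (π.symm i : ℕ) < (i : ℕ) then D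
    else H

/-- The last fall length: the length of the maximal suffix consisting of D moves. -/
def lastFall (mz : List Move) : ℕ :=
  (mz.reverse.takeWhile (fun m => decide (m = D))).length

/-- The maximum height of a path. -/
def maxHeight (mz : List Move) : ℕ :=
  (Finset.range (mz.length + 1)).sup fun i => (heightAt mz i).toNat

/-- `flatsAt mz k` is the number of H moves of `mz` made at height `k`. -/
def flatsAt (mz : List Move) (k : ℕ) : ℕ :=
  ((Finset.range mz.length).filter fun j => mz[j]? = some H ∧ heightAt mz j = (k : ℤ)).card

/-- `peaksAt mz k` is the number of U moves of `mz` ending at height `k`. -/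
def peaksAt (mz : List Move) (k : ℕ) : ℕ :=
  ((Finset.range mz.length).filter fun j => mz[j]? = some U ∧ heightAt mz (j + 1) = (k : ℤ)).card

/-- `downsAt mz k` is the number of D moves of `mz` starting at height `k`. -/
def downsAt (mz : List Move) (k : ℕ) : ℕ :=
  ((Finset.range mz.length).filter fun j => mz[j]? = some D ∧ heightAt mz j = (k : ℤ)).card

/-- A candidate building sequence `(f_0, p_1, f_1, …, p_h, f_h)`, recorded as its
height `h` together with the flat counts `f` and peak counts `p`. -/
structure BSeq where
  h : ℕ
  f : ℕ → ℕ
  p : ℕ → ℕ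

/-- `Sset n A` is the set of building sequences for width `n` and area `A`:
all `p`-entries `p_1, …, p_h` are positive, entries beyond the height are zero, and the
width and area conditions hold. -/
def Sset (n A : ℕ) : Set BSeq :=
  {a | (∀ i, 1 ≤ i → i ≤ a.h → 0 < a.p i) ∧
       a.p 0 = 0 ∧
       (∀ i, a.h < i → a.p i = 0) ∧
       (∀ i, a.h < i → a.f i = 0) ∧
       (∑ i ∈ Finset.range (a.h + 1), a.f i) + 2 * (∑ i ∈ Finset.Icc 1 a.h, a.p i) = n ∧
       (∑ i ∈ Finset.range (a.h + 1), i * a.f i) +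
         (∑ i ∈ Finset.Icc 1 a.h, (2 * i - 1) * a.p i) = A}

/-- `mz` has building sequence `a`. -/
def hasBuildSeq (mz : List Move) (a : BSeq) : Prop :=
  maxHeight mz = a.h ∧ (∀ i, flatsAt mz i = a.f i) ∧ (∀ i, peaksAt mz i = a.p i)

/-- `perm(a) = ∏_{i=0}^h (2i+1)^{f_i} · ∏_{i=1}^h i^{2p_i}`. -/
def permWeight (a : BSeq) : ℕ :=
  (∏ i ∈ Finset.range (a.h + 1), (2 * i + 1) ^ a.f i) *
    ∏ i ∈ Finset.Icc 1 a.h, i ^ (2 * a.p i)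

/-- `m(a)`, the number of Motzkin paths with building sequence `a`. -/
def mcount (a : BSeq) : ℕ :=
  Nat.choose (a.f a.h + a.p a.h - 1) (a.p a.h - 1) *
    (∏ i ∈ Finset.Icc 1 (a.h - 1),
      Nat.choose (a.p (i + 1) + a.f i) (a.f i) *
        Nat.choose (a.p (i + 1) + a.f i + a.p i - 1) (a.p i - 1)) *
    Nat.choose (a.p 1 + a.f 0) (a.f 0)

/-- `M(n,A,l)`: the number of Motzkin paths of width `n`, area `A` and last fall length `l`
(for negative arguments there are no such paths, so the value is `0`; the value at
`(0,0,0)` is `1`, counting the empty path). -/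
noncomputable def Mcount (n A l : ℤ) : ℕ :=
  Nat.card {mz : List Move // (mz.length : ℤ) = n ∧ IsMotzkin mz ∧ area mz = A ∧
    (lastFall mz : ℤ) = l}

/-- `D(n,d,l)`: the sum of the weights of all Motzkin paths of width `n`, area `d` and
last fall length `l`. -/
noncomputable def Dw (n d l : ℤ) : ℤ :=
  ∑ᶠ mz ∈ {mz : List Move | (mz.length : ℤ) = n ∧ IsMotzkin mz ∧ area mz = d ∧
    (lastFall mz : ℤ) = l}, weight mz

/-- `M(n,A,h,p)`: the number of Motzkin paths of width `n`, area `A`, maximum height `h`,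
with exactly `p` U-moves ending at height `h` and no H-moves at height `h`. -/
noncomputable def Mtop (n A h p : ℤ) : ℕ :=
  Nat.card {mz : List Move // (mz.length : ℤ) = n ∧ IsMotzkin mz ∧ area mz = A ∧
    (maxHeight mz : ℤ) = h ∧ (peaksAt mz h.toNat : ℤ) = p ∧ flatsAt mz h.toNat = 0}

/-- `D(n,d,h,p)`: the sum of weights of Motzkin paths of width `n`, area `d`,
maximum height `h`, with exactly `p` U-moves ending at height `h` and no H-moves at height `h`. -/
noncomputable def Dtop (n d h p : ℤ) : ℤ :=
  ∑ᶠ mz ∈ {mz : List Move | (mz.length : ℤ) = n ∧ IsMotzkin mz ∧ area mz = d ∧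
    (maxHeight mz : ℤ) = h ∧ (peaksAt mz h.toNat : ℤ) = p ∧ flatsAt mz h.toNat = 0}, weight mz

/-- The area under the first `i` moves of a path (trapezoid rule; may be a half-integer). -/
def prefixArea (mz : List Move) (i : ℕ) : ℚ :=
  ∑ j ∈ Finset.range i, ((heightAt mz j : ℚ) + (heightAt mz (j + 1) : ℚ)) / 2

/-!
Reading a permutation `π` from left to right, the pairs `(j, π j)` with both entries below `t`
form a partial permutation of `{0, …, t-1}`, and the height of `toPath π` after `t` steps is the
number of `j < t` with `π j ≥ t`. This gives nonnegativity, the return to the axis, and, summing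
over `t`, area `= ∑ⱼ (π j - j)⁺ = D(π)/2`.

Passing from `t` to `t + 1`, a partial permutation with `h` open sources (and `h` open targets)
extends in exactly one way with an up step, in `2h + 1` ways with a horizontal step (`t` closes an
open source, closes an open target, or is fixed) and in `h²` ways with a down step (it closes one
of each). So the fibre over a Motzkin path is counted by the product of these numbers, and that
product is `ω` because the heights reached by the up steps and the heights left by the down steps
are the same multiset.
-/

open Finset

lemma heightAt_append_singleton_of_le (w : List Move) (m : Move) {i : ℕ} (h : i ≤ w.length) :
    heightAt (w ++ [m]) i = heightAt w i := by
  rw [heightAt, heightAt, List.take_append_of_le_length h]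

lemma heightAt_append_singleton_succ (w : List Move) (m : Move) {n : ℕ} (h : w.length = n) :
    heightAt (w ++ [m]) (n + 1) = heightAt w n + m.step := by
  subst h
  simp [heightAt]

lemma heightAt_of_length_le (w : List Move) {i : ℕ} (h : w.length ≤ i) :
    heightAt w i = heightAt w w.length := by
  rw [heightAt, heightAt, List.take_of_length_le h, List.take_length]

def stepChoices : Move → ℕ → ℕ
  | U, _ => 1
  | H, h => 2 * h + 1
  | D, h => h * h

def choicesAt (w : List Move) (t : ℕ) : ℕ :=
  match w[t]? with
  | some m => stepChoices m (heightAt w t).toNat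
  | none => 1

lemma choicesAt_append_singleton_of_lt (w : List Move) (m : Move) {t : ℕ} (ht : t < w.length) :
    choicesAt (w ++ [m]) t = choicesAt w t := by
  rw [choicesAt, choicesAt, List.getElem?_append_left ht,
    heightAt_append_singleton_of_le w m ht.le]

lemma choicesAt_append_singleton_length (w : List Move) (m : Move) :
    choicesAt (w ++ [m]) w.length = stepChoices m (heightAt w w.length).toNat := by
  rw [choicesAt, List.getElem?_concat_length, heightAt_append_singleton_of_le w m le_rfl]

/-- The up steps reach the levels `1, 2, …` in turn, and each level is left again by a down step
unless the path still stands above it at the end; the unmatched levels give the factorial. -/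
lemma prod_heightAt_up_eq (w : List Move) (hw : ∀ i, 0 ≤ heightAt w i) :
    ∏ i ∈ range w.length, (if w[i]? = some U then heightAt w (i + 1) else 1) =
      (∏ i ∈ range w.length, if w[i]? = some D then heightAt w i else 1) *
        (heightAt w w.length).toNat.factorial := by
  induction w using List.reverseRecOn with
  | nil => simp [heightAt]
  | append_singleton w m ih =>
    have hw' : ∀ i, 0 ≤ heightAt w i := fun i => by
      rcases le_total i w.length with h | h
      · simpa [heightAt_append_singleton_of_le w m h] using hw i
      · simpa [heightAt_of_length_le w h, heightAt_append_singleton_of_le w m le_rfl] using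
          hw w.length
    have hstep := heightAt_append_singleton_succ w m rfl
    have hlast := hw (w.length + 1)
    have hterm (c : Move) (f : List Move → ℕ → ℤ)
        (hf : ∀ i < w.length, f (w ++ [m]) i = f w i) (i : ℕ) (hi : i ∈ range w.length) :
        (if (w ++ [m])[i]? = some c then f (w ++ [m]) i else 1) =
          if w[i]? = some c then f w i else 1 := by
      rw [List.getElem?_append_left (mem_range.mp hi), hf i (mem_range.mp hi)]
    rw [List.length_append, List.length_singleton, prod_range_succ, prod_range_succ,
      prod_congr rfl (hterm U (fun v i => heightAt v (i + 1))
        fun i hi => heightAt_append_singleton_of_le w m hi),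
      prod_congr rfl (hterm D heightAt fun i hi => heightAt_append_singleton_of_le w m hi.le),
      ih hw', List.getElem?_concat_length, hstep, heightAt_append_singleton_of_le w m le_rfl]
    have he := hw' w.length
    rw [hstep] at hlast
    cases m <;> simp only [Move.step, reduceCtorEq, Option.some.injEq, if_true, if_false] at hlast ⊢
    · rw [show (heightAt w w.length + 1).toNat = (heightAt w w.length).toNat + 1 by omega,
        Nat.factorial_succ]
      push_cast
      rw [Int.toNat_of_nonneg he]
      ring
    · simp
    · rw [show (heightAt w w.length).toNat = (heightAt w w.length + -1).toNat + 1 by omega,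
        Nat.factorial_succ]
      push_cast
      rw [Int.toNat_of_nonneg hlast]
      ring

lemma weight_eq_prod_choicesAt {mz : List Move} (hmz : IsMotzkin mz) :
    weight mz = ∏ t ∈ range mz.length, (choicesAt mz t : ℤ) := by
  set up := fun i => if mz[i]? = some U then heightAt mz (i + 1) else 1
  set down := fun i => if mz[i]? = some D then heightAt mz i else 1
  set flat := fun i => if mz[i]? = some H then 2 * heightAt mz i + 1 else 1
  have hweight : ∀ i ∈ range mz.length, moveWeight mz i = up i * (down i * flat i) := by
    intro i _
    simp only [moveWeight, up, down, flat]
    split <;> simp_all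
  have hchoice : ∀ i ∈ range mz.length, (choicesAt mz i : ℤ) = down i * (down i * flat i) := by
    intro i _
    have := hmz.1 i
    simp only [choicesAt, down, flat]
    split <;> rename_i m hm <;> simp only [hm]
    · cases m <;> simp [stepChoices, Int.toNat_of_nonneg this]
    · simp
  rw [weight, prod_congr rfl hweight, prod_mul_distrib, prod_heightAt_up_eq mz hmz.1, hmz.2,
    prod_congr rfl hchoice, prod_mul_distrib, prod_mul_distrib, prod_mul_distrib, Int.toNat_zero,
    Nat.factorial_zero, Nat.cast_one, mul_one]

/-- A finite partial permutation of `ℕ`, given by its graph `{(j, π j)}`. -/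
def IsPartialPerm (R : Finset (ℕ × ℕ)) : Prop :=
  ∀ p ∈ R, ∀ q ∈ R, p.1 = q.1 ↔ p.2 = q.2

instance : DecidablePred IsPartialPerm := fun R => by unfold IsPartialPerm; infer_instance

namespace IsPartialPerm

variable {R : Finset (ℕ × ℕ)}

lemma eq_of_fst_eq (hR : IsPartialPerm R) {p q : ℕ × ℕ} (hp : p ∈ R) (hq : q ∈ R)
    (h : p.1 = q.1) : p = q :=
  Prod.ext h ((hR p hp q hq).1 h)

lemma eq_of_snd_eq (hR : IsPartialPerm R) {p q : ℕ × ℕ} (hp : p ∈ R) (hq : q ∈ R)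
    (h : p.2 = q.2) : p = q :=
  Prod.ext ((hR p hp q hq).2 h) h

lemma subset (hR : IsPartialPerm R) {R' : Finset (ℕ × ℕ)} (h : R' ⊆ R) : IsPartialPerm R' :=
  fun p hp q hq => hR p (h hp) q (h hq)

lemma insert (hR : IsPartialPerm R) {p : ℕ × ℕ} (hp : ∀ q ∈ R, q.1 ≠ p.1 ∧ q.2 ≠ p.2) :
    IsPartialPerm (insert p R) := by
  intro a ha b hb
  rw [Finset.mem_insert] at ha hb
  rcases ha with rfl | ha <;> rcases hb with rfl | hb
  · simp
  · have := hp b hb; constructor <;> intro h <;> simp_all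
  · have := hp a ha; constructor <;> intro h <;> simp_all
  · exact hR a ha b hb

end IsPartialPerm

section PartialPerm

variable {R E : Finset (ℕ × ℕ)} {n : ℕ} {m : Move}

def partialPerms (n : ℕ) : Finset (Finset (ℕ × ℕ)) :=
  (range n ×ˢ range n).powerset.filter IsPartialPerm

lemma mem_partialPerms :
    R ∈ partialPerms n ↔ (∀ p ∈ R, p.1 < n ∧ p.2 < n) ∧ IsPartialPerm R := by
  simp [partialPerms, Finset.subset_iff]

lemma partialPerms_mono {n n' : ℕ} (h : n ≤ n') : partialPerms n ⊆ partialPerms n' := by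
  intro R hR
  rw [mem_partialPerms] at hR ⊢
  exact ⟨fun p hp => by have := hR.1 p hp; omega, hR.2⟩

lemma insert_mem_partialPerms {p : ℕ × ℕ} (hR : R ∈ partialPerms n) (hp : p.1 < n ∧ p.2 < n)
    (hfree : ∀ q ∈ R, q.1 ≠ p.1 ∧ q.2 ≠ p.2) : insert p R ∈ partialPerms n := by
  rw [mem_partialPerms] at hR ⊢
  refine ⟨fun q hq => ?_, hR.2.insert hfree⟩
  rcases mem_insert.mp hq with rfl | hq
  exacts [hp, hR.1 q hq]

def openSources (R : Finset (ℕ × ℕ)) (n : ℕ) : Finset ℕ :=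
  (range n).filter fun j => ∀ p ∈ R, p.1 = j → n ≤ p.2

def openTargets (R : Finset (ℕ × ℕ)) (n : ℕ) : Finset ℕ :=
  (range n).filter fun k => ∀ p ∈ R, p.2 = k → n ≤ p.1

lemma lt_of_mem_openSources {j : ℕ} (hj : j ∈ openSources R n) : j < n :=
  mem_range.mp (mem_filter.mp hj).1

lemma lt_of_mem_openTargets {k : ℕ} (hk : k ∈ openTargets R n) : k < n :=
  mem_range.mp (mem_filter.mp hk).1

lemma mem_openSources_iff {j : ℕ} (hR : ∀ p ∈ R, p.2 < n) :
    j ∈ openSources R n ↔ j < n ∧ ∀ p ∈ R, p.1 ≠ j := by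
  simp only [openSources, mem_filter, mem_range]
  refine and_congr_right fun _ => forall₂_congr fun p hp => ?_
  have := hR p hp
  omega

lemma mem_openTargets_iff {k : ℕ} (hR : ∀ p ∈ R, p.1 < n) :
    k ∈ openTargets R n ↔ k < n ∧ ∀ p ∈ R, p.2 ≠ k := by
  simp only [openTargets, mem_filter, mem_range]
  refine and_congr_right fun _ => forall₂_congr fun p hp => ?_
  have := hR p hp
  omega

lemma card_range_sdiff_image_add_card {f : ℕ × ℕ → ℕ} (hf : Set.InjOn f R) (hR : ∀ p ∈ R, f p < n) :
    #(range n \ R.image f) + #R = n := by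
  have hsub : R.image f ⊆ range n := fun j hj => by
    obtain ⟨p, hp, rfl⟩ := mem_image.mp hj
    exact mem_range.mpr (hR p hp)
  have := card_le_card hsub
  rw [card_sdiff_of_subset hsub, card_range, card_image_of_injOn hf] at *
  omega

lemma card_openSources_add_card (hR : R ∈ partialPerms n) :
    #(openSources R n) + #R = n := by
  obtain ⟨hRn, hRp⟩ := mem_partialPerms.mp hR
  convert card_range_sdiff_image_add_card (fun p hp q hq => hRp.eq_of_fst_eq hp hq)
    fun p hp => (hRn p hp).1 using 3
  ext j
  rw [mem_openSources_iff fun p hp => (hRn p hp).2, mem_sdiff, mem_range, mem_image]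
  exact and_congr_right fun _ =>
    ⟨fun h ⟨p, hp, hpj⟩ => h p hp hpj, fun h p hp hpj => h ⟨p, hp, hpj⟩⟩

lemma card_openTargets_add_card (hR : R ∈ partialPerms n) :
    #(openTargets R n) + #R = n := by
  obtain ⟨hRn, hRp⟩ := mem_partialPerms.mp hR
  convert card_range_sdiff_image_add_card (fun p hp q hq => hRp.eq_of_snd_eq hp hq)
    fun p hp => (hRn p hp).2 using 3
  ext k
  rw [mem_openTargets_iff fun p hp => (hRn p hp).1, mem_sdiff, mem_range, mem_image]
  exact and_congr_right fun _ =>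
    ⟨fun h ⟨p, hp, hpk⟩ => h p hp hpk, fun h p hp hpk => h ⟨p, hp, hpk⟩⟩

/-- On the graph of a permutation this is the rule defining `toPath` (`moveAt_permGraph`), but it
only looks at pairs inside `[0, t]²`, so it also makes sense for partial permutations. -/
def moveAt (R : Finset (ℕ × ℕ)) (t : ℕ) : Move :=
  if (∃ p ∈ R, p.1 = t ∧ p.2 ≤ t) ∨ (∃ p ∈ R, p.2 = t ∧ p.1 ≤ t) then
    if (∃ p ∈ R, p.1 = t ∧ p.2 < t) ∧ (∃ p ∈ R, p.2 = t ∧ p.1 < t) then D else H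
  else U

lemma moveAt_congr {R' : Finset (ℕ × ℕ)} {t : ℕ}
    (h : ∀ p : ℕ × ℕ, p.1 ≤ t → p.2 ≤ t → (p.1 = t ∨ p.2 = t) → (p ∈ R ↔ p ∈ R')) :
    moveAt R t = moveAt R' t := by
  have key (Q : ℕ × ℕ → Prop) (hQ : ∀ p, Q p → p.1 ≤ t ∧ p.2 ≤ t ∧ (p.1 = t ∨ p.2 = t)) :
      (∃ p ∈ R, Q p) ↔ ∃ p ∈ R', Q p :=
    exists_congr fun p => and_congr_left fun hq =>
      let ⟨h1, h2, h3⟩ := hQ p hq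
      h p h1 h2 h3
  unfold moveAt
  simp only [key (fun p => p.1 = t ∧ p.2 ≤ t) (by omega),
    key (fun p => p.2 = t ∧ p.1 ≤ t) (by omega), key (fun p => p.1 = t ∧ p.2 < t) (by omega),
    key (fun p => p.2 = t ∧ p.1 < t) (by omega)]

def pathOf (R : Finset (ℕ × ℕ)) (n : ℕ) : List Move :=
  (List.range n).map (moveAt R)

lemma pathOf_succ (R : Finset (ℕ × ℕ)) (n : ℕ) :
    pathOf R (n + 1) = pathOf R n ++ [moveAt R n] := by
  simp [pathOf, List.range_succ]

@[simp] lemma length_pathOf (R : Finset (ℕ × ℕ)) (n : ℕ) : (pathOf R n).length = n := by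
  simp [pathOf]

def restrictBelow (R : Finset (ℕ × ℕ)) (n : ℕ) : Finset (ℕ × ℕ) :=
  R.filter fun p => p.1 < n ∧ p.2 < n

def newPairs (R : Finset (ℕ × ℕ)) (n : ℕ) : Finset (ℕ × ℕ) :=
  R.filter fun p => p.1 = n ∨ p.2 = n

lemma moveAt_restrictBelow (R : Finset (ℕ × ℕ)) {t n : ℕ} (h : t < n) :
    moveAt (restrictBelow R n) t = moveAt R t := by
  refine moveAt_congr fun p h1 h2 _ => ?_
  simp only [restrictBelow, mem_filter]
  exact and_iff_left (by omega)

lemma pathOf_restrictBelow (R : Finset (ℕ × ℕ)) (n : ℕ) :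
    pathOf (restrictBelow R n) n = pathOf R n :=
  List.map_congr_left fun _ ht => moveAt_restrictBelow R (List.mem_range.mp ht)

lemma moveAt_union_of_lt (hR : ∀ p ∈ R, p.1 < n ∧ p.2 < n) :
    moveAt (R ∪ E) n = moveAt E n := by
  refine moveAt_congr fun p _ _ h3 => ?_
  rw [mem_union]
  exact or_iff_right fun hp => by have := hR p hp; omega

lemma restrictBelow_mem_partialPerms (hR : IsPartialPerm R) (n : ℕ) :
    restrictBelow R n ∈ partialPerms n :=
  mem_partialPerms.mpr ⟨fun _ hp => (mem_filter.mp hp).2, hR.subset (filter_subset _ _)⟩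

lemma restrictBelow_union_newPairs (hR : R ∈ partialPerms (n + 1)) :
    restrictBelow R n ∪ newPairs R n = R := by
  ext p
  have := (mem_partialPerms.mp hR).1 p
  simp only [restrictBelow, newPairs, mem_union, mem_filter]
  constructor
  · rintro (⟨hp, -⟩ | ⟨hp, -⟩) <;> exact hp
  · intro hp
    by_cases h : p.1 < n ∧ p.2 < n
    exacts [Or.inl ⟨hp, h⟩, Or.inr ⟨hp, by have := this hp; omega⟩]

lemma disjoint_restrictBelow_newPairs (R : Finset (ℕ × ℕ)) (n : ℕ) :
    Disjoint (restrictBelow R n) (newPairs R n) := by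
  rw [disjoint_left]
  simp only [restrictBelow, newPairs, mem_filter]
  omega

lemma restrictBelow_union (hR : ∀ p ∈ R, p.1 < n ∧ p.2 < n)
    (hE : ∀ p ∈ E, p.1 = n ∨ p.2 = n) : restrictBelow (R ∪ E) n = R := by
  ext p
  simp only [restrictBelow, mem_filter, mem_union]
  constructor
  · rintro ⟨hp | hp, h⟩
    · exact hp
    · have := hE p hp; omega
  · exact fun hp => ⟨Or.inl hp, hR p hp⟩

lemma newPairs_union (hR : ∀ p ∈ R, p.1 < n ∧ p.2 < n)
    (hE : ∀ p ∈ E, p.1 = n ∨ p.2 = n) : newPairs (R ∪ E) n = E := by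
  ext p
  simp only [newPairs, mem_filter, mem_union]
  constructor
  · rintro ⟨hp | hp, h⟩
    · have := hR p hp; omega
    · exact hp
  · exact fun hp => ⟨Or.inr hp, hE p hp⟩

/-- The possible sets of pairs involving `n` that extend `R ∈ partialPerms n` with move `m` at `n`.
For `H`, the source `j = n` gives the fixed point `(n, n)`. -/
def extensions (R : Finset (ℕ × ℕ)) (n : ℕ) : Move → Finset (Finset (ℕ × ℕ))
  | U => {∅}
  | H => (insert n (openSources R n)).image (fun j => {(j, n)}) ∪
      (openTargets R n).image (fun k => {(n, k)})
  | D => (openSources R n ×ˢ openTargets R n).image (fun jk => {(jk.1, n), (n, jk.2)})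

lemma card_extensions (R : Finset (ℕ × ℕ)) (n : ℕ) (m : Move) {h : ℕ}
    (hA : #(openSources R n) = h) (hB : #(openTargets R n) = h) :
    #(extensions R n m) = stepChoices m h := by
  cases m with
  | U => rfl
  | H =>
    rw [extensions, card_union_of_disjoint, card_image_of_injective, card_image_of_injective,
      card_insert_of_notMem (fun h => (lt_of_mem_openSources h).false), hA, hB, stepChoices]
    · ring
    · intro a b h; simpa using h
    · intro a b h; simpa using h
    · rw [disjoint_left]
      simp only [mem_image, mem_insert, not_exists, not_and, forall_exists_index, and_imp]
      rintro _ j hj rfl k hk h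
      have := lt_of_mem_openTargets hk
      rw [singleton_inj, Prod.mk.injEq] at h
      omega
  | D =>
    rw [extensions, card_image_of_injOn, card_product, hA, hB, stepChoices]
    rintro ⟨j, k⟩ hjk ⟨j', k'⟩ - h
    simp only [coe_product, Set.mem_prod, mem_coe] at hjk
    have := lt_of_mem_openSources hjk.1; have := lt_of_mem_openTargets hjk.2
    beta_reduce at h
    have hj : (j, n) ∈ ({(j', n), (n, k')} : Finset (ℕ × ℕ)) := by rw [← h]; simp
    have hk : (n, k) ∈ ({(j', n), (n, k')} : Finset (ℕ × ℕ)) := by rw [← h]; simp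
    simp only [mem_insert, mem_singleton, Prod.mk.injEq] at hj hk
    rw [Prod.mk.injEq]
    omega

lemma card_of_mem_extensions (hE : E ∈ extensions R n m) : (#E : ℤ) = 1 - m.step := by
  cases m with
  | U =>
    obtain rfl : E = ∅ := mem_singleton.mp hE
    rfl
  | H =>
    simp only [extensions, mem_union, mem_image] at hE
    rcases hE with ⟨j, -, rfl⟩ | ⟨k, -, rfl⟩ <;> simp [Move.step]
  | D =>
    simp only [extensions, mem_image, mem_product, Prod.exists] at hE
    obtain ⟨j, k, ⟨hj, -⟩, rfl⟩ := hE
    have := lt_of_mem_openSources hj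
    rw [card_pair (by rw [ne_eq, Prod.mk.injEq]; omega)]
    simp [Move.step]

lemma forall_mem_of_mem_extensions (hE : E ∈ extensions R n m) : ∀ p ∈ E, p.1 = n ∨ p.2 = n := by
  cases m with
  | U =>
    obtain rfl : E = ∅ := mem_singleton.mp hE
    simp
  | H =>
    simp only [extensions, mem_union, mem_image] at hE
    rcases hE with ⟨j, -, rfl⟩ | ⟨k, -, rfl⟩ <;> simp
  | D =>
    simp only [extensions, mem_image, mem_product, Prod.exists] at hE
    obtain ⟨j, k, -, rfl⟩ := hE
    simp

lemma moveAt_union_of_mem_extensions (hR : ∀ p ∈ R, p.1 < n ∧ p.2 < n)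
    (hE : E ∈ extensions R n m) : moveAt (R ∪ E) n = m := by
  rw [moveAt_union_of_lt hR]
  cases m with
  | U =>
    obtain rfl : E = ∅ := mem_singleton.mp hE
    simp [moveAt]
  | H =>
    simp only [extensions, mem_union, mem_image, mem_insert] at hE
    rcases hE with ⟨j, rfl | hj, rfl⟩ | ⟨k, hk, rfl⟩
    · simp [moveAt]
    · simp [moveAt, (lt_of_mem_openSources hj).le]
    · simp [moveAt, (lt_of_mem_openTargets hk).le]
  | D =>
    simp only [extensions, mem_image, mem_product, Prod.exists] at hE
    obtain ⟨j, k, ⟨hj, hk⟩, rfl⟩ := hE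
    have := lt_of_mem_openSources hj; have := lt_of_mem_openTargets hk
    simp [moveAt, *, le_of_lt]

lemma union_mem_partialPerms_of_mem_extensions (hR : R ∈ partialPerms n)
    (hE : E ∈ extensions R n m) : R ∪ E ∈ partialPerms (n + 1) := by
  have hRn := (mem_partialPerms.mp hR).1
  have hR1 : R ∈ partialPerms (n + 1) := partialPerms_mono n.le_succ hR
  have hA {j} (hj : j ∈ openSources R n) : j < n ∧ ∀ q ∈ R, q.1 ≠ j :=
    (mem_openSources_iff fun q hq => (hRn q hq).2).mp hj
  have hB {k} (hk : k ∈ openTargets R n) : k < n ∧ ∀ q ∈ R, q.2 ≠ k :=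
    (mem_openTargets_iff fun q hq => (hRn q hq).1).mp hk
  have hfree : ∀ q ∈ R, q.1 ≠ n ∧ q.2 ≠ n := fun q hq => by have := hRn q hq; omega
  cases m with
  | U =>
    obtain rfl : E = ∅ := mem_singleton.mp hE
    simpa using hR1
  | H =>
    simp only [extensions, mem_union, mem_image, mem_insert] at hE
    rcases hE with ⟨j, hj, rfl⟩ | ⟨k, hk, rfl⟩ <;> rw [union_singleton]
    · have hjn : j ≤ n := by rcases hj with rfl | hj <;> [rfl; exact (hA hj).1.le]
      refine insert_mem_partialPerms hR1 ⟨by omega, by omega⟩ fun q hq => ⟨?_, (hfree q hq).2⟩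
      rcases hj with rfl | hj
      exacts [(hfree q hq).1, (hA hj).2 q hq]
    · obtain ⟨hkn, hk⟩ := hB hk
      exact insert_mem_partialPerms hR1 ⟨by omega, by omega⟩
        fun q hq => ⟨(hfree q hq).1, hk q hq⟩
  | D =>
    simp only [extensions, mem_image, mem_product, Prod.exists] at hE
    obtain ⟨j, k, ⟨hj, hk⟩, rfl⟩ := hE
    obtain ⟨hjn, hj⟩ := hA hj
    obtain ⟨hkn, hk⟩ := hB hk
    rw [union_insert, union_singleton]
    refine insert_mem_partialPerms
      (insert_mem_partialPerms hR1 ⟨by omega, by omega⟩ fun q hq => ⟨(hfree q hq).1, hk q hq⟩)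
      ⟨by omega, by omega⟩ fun q hq => ?_
    rcases mem_insert.mp hq with rfl | hq
    exacts [⟨by dsimp only; omega, by dsimp only; omega⟩, ⟨hj q hq, (hfree q hq).2⟩]

lemma mem_openSources_of_union {j : ℕ} (hR : ∀ p ∈ R, p.1 < n ∧ p.2 < n)
    (hRE : IsPartialPerm (R ∪ E)) (hj : (j, n) ∈ E) (hjn : j < n) : j ∈ openSources R n :=
  (mem_openSources_iff fun q hq => (hR q hq).2).mpr ⟨hjn, fun q hq hqj =>
    (hR q hq).2.ne ((hRE q (mem_union_left E hq) _ (mem_union_right R hj)).1 hqj)⟩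

lemma mem_openTargets_of_union {k : ℕ} (hR : ∀ p ∈ R, p.1 < n ∧ p.2 < n)
    (hRE : IsPartialPerm (R ∪ E)) (hk : (n, k) ∈ E) (hkn : k < n) : k ∈ openTargets R n :=
  (mem_openTargets_iff fun q hq => (hR q hq).1).mpr ⟨hkn, fun q hq hqk =>
    (hR q hq).1.ne ((hRE q (mem_union_left E hq) _ (mem_union_right R hk)).2 hqk)⟩

namespace IsPartialPerm

lemma eq_pair (hE : IsPartialPerm E) (hn : ∀ p ∈ E, p.1 = n ∨ p.2 = n) {j k : ℕ}
    (hj : (j, n) ∈ E) (hk : (n, k) ∈ E) : E = {(j, n), (n, k)} := by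
  ext p
  simp only [mem_insert, mem_singleton]
  refine ⟨fun hp => ?_, by rintro (rfl | rfl) <;> assumption⟩
  rcases hn p hp with h | h
  exacts [Or.inr (hE.eq_of_fst_eq hp hk h), Or.inl (hE.eq_of_snd_eq hp hj h)]

/-- Two distinct pairs through `n` in `[0, n]²` can only be `(j, n)` and `(n, k)`, `j, k < n`. -/
lemma eq_singleton (hE : IsPartialPerm E) (hn : ∀ p ∈ E, p.1 = n ∨ p.2 = n)
    (hle : ∀ p ∈ E, p.1 ≤ n ∧ p.2 ≤ n)
    (hback : ¬((∃ p ∈ E, p.1 = n ∧ p.2 < n) ∧ ∃ p ∈ E, p.2 = n ∧ p.1 < n))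
    {p : ℕ × ℕ} (hp : p ∈ E) : E = {p} := by
  have hcross : ∀ q ∈ E, ∀ r ∈ E, q.1 = n → r.2 = n → q = r := by
    intro q hq r hr hq1 hr2
    by_cases hq2 : q.2 = n
    · exact hE.eq_of_snd_eq hq hr (hq2.trans hr2.symm)
    by_cases hr1 : r.1 = n
    · exact hE.eq_of_fst_eq hq hr (hq1.trans hr1.symm)
    have := hle q hq; have := hle r hr
    exact (hback ⟨⟨q, hq, hq1, by omega⟩, ⟨r, hr, hr2, by omega⟩⟩).elim
  refine eq_singleton_iff_unique_mem.mpr ⟨hp, fun q hq => ?_⟩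
  rcases hn p hp with hp1 | hp2 <;> rcases hn q hq with hq1 | hq2
  exacts [hE.eq_of_fst_eq hq hp (hq1.trans hp1.symm), (hcross p hp q hq hp1 hq2).symm,
    hcross q hq p hp hq1 hp2, hE.eq_of_snd_eq hq hp (hq2.trans hp2.symm)]

end IsPartialPerm

lemma mem_extensions_of_union (hR : ∀ p ∈ R, p.1 < n ∧ p.2 < n)
    (hE : ∀ p ∈ E, p.1 = n ∨ p.2 = n) (hRE : R ∪ E ∈ partialPerms (n + 1)) :
    E ∈ extensions R n (moveAt (R ∪ E) n) := by
  obtain ⟨hREn, hREp⟩ := mem_partialPerms.mp hRE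
  have hEn : ∀ p ∈ E, p.1 ≤ n ∧ p.2 ≤ n := fun p hp => by
    have := hREn p (mem_union_right R hp); omega
  have hEp : IsPartialPerm E := hREp.subset subset_union_right
  rw [moveAt_union_of_lt hR, moveAt]
  split_ifs with hlinked hback
  · obtain ⟨⟨⟨_, k⟩, hk, rfl, hkn⟩, ⟨⟨j, _⟩, hj, rfl, hjn⟩⟩ := hback
    rw [hEp.eq_pair hE hj hk]
    exact mem_image.mpr ⟨(j, k), mem_product.mpr ⟨mem_openSources_of_union hR hREp hj hjn,
      mem_openTargets_of_union hR hREp hk hkn⟩, rfl⟩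
  · obtain ⟨⟨a, b⟩, hp, hab⟩ : ∃ p ∈ E, p.1 = n ∨ p.2 = n := by
      rcases hlinked with ⟨p, hp, h, -⟩ | ⟨p, hp, h, -⟩
      exacts [⟨p, hp, Or.inl h⟩, ⟨p, hp, Or.inr h⟩]
    rw [hEp.eq_singleton hE hEn hback hp]
    simp only [extensions, mem_union, mem_image, mem_insert]
    have hle : a ≤ n ∧ b ≤ n := hEn _ hp
    by_cases hb : b = n
    · rw [hb] at hp ⊢
      refine Or.inl ⟨a, ?_, rfl⟩
      by_cases ha : a = n
      exacts [Or.inl ha, Or.inr (mem_openSources_of_union hR hREp hp (by omega))]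
    · obtain rfl : a = n := by simpa [hb] using hab
      exact Or.inr ⟨b, mem_openTargets_of_union hR hREp hp (by omega), rfl⟩
  · refine mem_singleton.mpr (eq_empty_of_forall_notMem fun p hp => hlinked ?_)
    have := hEn p hp
    rcases hE p hp with h | h
    exacts [Or.inl ⟨p, hp, h, by omega⟩, Or.inr ⟨p, hp, h, by omega⟩]

lemma newPairs_mem_extensions (hR : R ∈ partialPerms (n + 1)) :
    newPairs R n ∈ extensions (restrictBelow R n) n (moveAt R n) := by
  have := mem_extensions_of_union (R := restrictBelow R n) (E := newPairs R n)
    (fun _ hp => (mem_filter.mp hp).2) (fun _ hp => (mem_filter.mp hp).2)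
    (by rwa [restrictBelow_union_newPairs hR])
  rwa [restrictBelow_union_newPairs hR] at this

lemma heightAt_pathOf (hR : R ∈ partialPerms n) :
    heightAt (pathOf R n) n = #(openSources R n) := by
  suffices heightAt (pathOf R n) n = n - #R by have := card_openSources_add_card hR; omega
  induction n generalizing R with
  | zero =>
    have : R = ∅ := subset_empty.mp fun p hp => by have := (mem_partialPerms.mp hR).1 p hp; omega
    simp [this, pathOf, heightAt]
  | succ n ih =>
    have hcard : #R = #(restrictBelow R n) + #(newPairs R n) := by
      rw [← card_union_of_disjoint (disjoint_restrictBelow_newPairs R n),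
        restrictBelow_union_newPairs hR]
    have hnew := card_of_mem_extensions (newPairs_mem_extensions hR)
    rw [pathOf_succ, ← pathOf_restrictBelow,
      heightAt_append_singleton_succ _ _ (length_pathOf _ _),
      ih (restrictBelow_mem_partialPerms (mem_partialPerms.mp hR).2 n)]
    push_cast
    omega

lemma openSources_restrictBelow (R : Finset (ℕ × ℕ)) (t : ℕ) :
    openSources (restrictBelow R t) t = openSources R t := by
  ext j
  simp only [openSources, restrictBelow, mem_filter, mem_range, and_imp]
  exact and_congr_right fun _ => forall₂_congr fun _ _ => by omega

lemma heightAt_pathOf_of_le (hR : IsPartialPerm R) {t : ℕ} (h : t ≤ n) :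
    heightAt (pathOf R n) t = #(openSources R t) := by
  have htake : (pathOf R n).take t = pathOf (restrictBelow R t) t := by
    rw [pathOf_restrictBelow, pathOf, pathOf, ← List.map_take, List.take_range, min_eq_left h]
  rw [← openSources_restrictBelow, ← heightAt_pathOf (restrictBelow_mem_partialPerms hR t),
    ← htake, heightAt, heightAt, List.take_take, min_self]

lemma card_filter_restrictBelow_eq_stepChoices (hR : R ∈ partialPerms n) (m : Move) :
    #{S ∈ partialPerms (n + 1) | restrictBelow S n = R ∧ moveAt S n = m} =
      stepChoices m #(openSources R n) := by
  have hRn := (mem_partialPerms.mp hR).1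
  have hAB : #(openTargets R n) = #(openSources R n) := by
    have := card_openSources_add_card hR; have := card_openTargets_add_card hR; omega
  rw [← card_extensions R n m rfl hAB]
  refine card_bij' (fun S _ => newPairs S n) (fun E _ => R ∪ E) ?_ ?_ ?_ ?_
  · intro S hS
    obtain ⟨hS, hSR, hm⟩ := mem_filter.mp hS
    exact hSR ▸ hm ▸ newPairs_mem_extensions hS
  · intro E hE
    exact mem_filter.mpr ⟨union_mem_partialPerms_of_mem_extensions hR hE,
      restrictBelow_union hRn (forall_mem_of_mem_extensions hE),
      moveAt_union_of_mem_extensions hRn hE⟩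
  · intro S hS
    obtain ⟨hS, hSR, -⟩ := mem_filter.mp hS
    exact hSR ▸ restrictBelow_union_newPairs hS
  · intro E hE
    exact newPairs_union hRn (forall_mem_of_mem_extensions hE)

theorem card_filter_pathOf_eq_prod_choicesAt (w : List Move) :
    #{R ∈ partialPerms w.length | pathOf R w.length = w} =
      ∏ t ∈ range w.length, choicesAt w t := by
  induction w using List.reverseRecOn with
  | nil => rfl
  | append_singleton w m ih =>
    have hfiber : ∀ R ∈ {R ∈ partialPerms w.length | pathOf R w.length = w},
        #{S ∈ {S ∈ partialPerms (w.length + 1) | pathOf S (w.length + 1) = w ++ [m]} |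
          restrictBelow S w.length = R} = choicesAt (w ++ [m]) w.length := by
      intro R hR
      obtain ⟨hR, hRw⟩ := mem_filter.mp hR
      have hh := heightAt_pathOf hR
      rw [hRw] at hh
      rw [choicesAt_append_singleton_length, hh, Int.toNat_natCast,
        ← card_filter_restrictBelow_eq_stepChoices hR m, filter_filter]
      refine congrArg card (filter_congr fun S _ => ?_)
      rw [pathOf_succ, ← pathOf_restrictBelow S w.length]
      constructor
      · rintro ⟨h, hSR⟩
        rw [hSR, hRw] at h
        exact ⟨hSR, by simpa using h⟩
      · rintro ⟨hSR, hm⟩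
        exact ⟨by rw [hSR, hRw, hm], hSR⟩
    have hmaps : ∀ S ∈ {S ∈ partialPerms (w.length + 1) | pathOf S (w.length + 1) = w ++ [m]},
        restrictBelow S w.length ∈ {R ∈ partialPerms w.length | pathOf R w.length = w} := by
      intro S hS
      obtain ⟨hS, hpath⟩ := mem_filter.mp hS
      refine mem_filter.mpr ⟨restrictBelow_mem_partialPerms (mem_partialPerms.mp hS).2 _, ?_⟩
      rw [pathOf_restrictBelow]
      rw [pathOf_succ] at hpath
      exact List.append_inj_left' hpath rfl
    rw [List.length_append, List.length_singleton, card_eq_sum_card_fiberwise hmaps,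
      sum_congr rfl hfiber, sum_const, smul_eq_mul, ih, prod_range_succ]
    congr 1
    exact prod_congr rfl fun t ht => (choicesAt_append_singleton_of_lt w m (mem_range.mp ht)).symm

end PartialPerm

section Perm

variable {n : ℕ}

def permGraph (π : Equiv.Perm (Fin n)) : Finset (ℕ × ℕ) :=
  univ.image fun j : Fin n => ((j : ℕ), (π j : ℕ))

lemma exists_mem_permGraph_fst (π : Equiv.Perm (Fin n)) (x : Fin n) (P : ℕ → Prop) :
    (∃ p ∈ permGraph π, p.1 = x ∧ P p.2) ↔ P (π x) := by
  simp [permGraph, Fin.val_inj]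

lemma exists_mem_permGraph_snd (π : Equiv.Perm (Fin n)) (x : Fin n) (P : ℕ → Prop) :
    (∃ p ∈ permGraph π, p.2 = x ∧ P p.1) ↔ P (π.symm x) := by
  simp [permGraph, Fin.val_inj, ← Equiv.eq_symm_apply]

lemma forall_mem_permGraph_fst (π : Equiv.Perm (Fin n)) (x : Fin n) (P : ℕ → Prop) :
    (∀ p ∈ permGraph π, p.1 = x → P p.2) ↔ P (π x) := by
  simp [permGraph, Fin.val_inj]

lemma moveAt_permGraph (π : Equiv.Perm (Fin n)) (x : Fin n) :
    moveAt (permGraph π) x =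
      if (x : ℕ) < (π x : ℕ) ∧ (x : ℕ) < (π.symm x : ℕ) then U
      else if (π x : ℕ) < (x : ℕ) ∧ (π.symm x : ℕ) < (x : ℕ) then D else H := by
  have hfix : (π x : ℕ) = x ↔ (π.symm x : ℕ) = x := by
    rw [Fin.val_inj, Fin.val_inj, ← Equiv.eq_symm_apply, eq_comm]
  unfold moveAt
  simp only [exists_mem_permGraph_fst π x (· ≤ (x : ℕ)),
    exists_mem_permGraph_snd π x (· ≤ (x : ℕ)), exists_mem_permGraph_fst π x (· < (x : ℕ)),
    exists_mem_permGraph_snd π x (· < (x : ℕ))]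
  split_ifs <;> first | rfl | omega

lemma toPath_eq_pathOf_permGraph (π : Equiv.Perm (Fin n)) : toPath π = pathOf (permGraph π) n := by
  refine List.ext_getElem (by simp [toPath]) fun i h _ => ?_
  have hi : i < n := by simpa [toPath] using h
  simp only [toPath, pathOf, List.getElem_map, List.getElem_range]
  convert (moveAt_permGraph π ((List.finRange n)[i]'(by simpa using hi))).symm using 2
  simp

lemma permGraph_mem_partialPerms (π : Equiv.Perm (Fin n)) : permGraph π ∈ partialPerms n := by
  refine mem_partialPerms.mpr ⟨fun p hp => ?_, fun p hp q hq => ?_⟩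
  · obtain ⟨j, -, rfl⟩ := mem_image.mp hp
    exact ⟨j.isLt, (π j).isLt⟩
  · obtain ⟨j, -, rfl⟩ := mem_image.mp hp
    obtain ⟨k, -, rfl⟩ := mem_image.mp hq
    simp only [Fin.val_inj, π.apply_eq_iff_eq]

lemma card_openSources_permGraph (π : Equiv.Perm (Fin n)) {t : ℕ} (ht : t ≤ n) :
    #(openSources (permGraph π) t) = #{j : Fin n | (j : ℕ) < t ∧ t ≤ π j} := by
  rw [← card_map Fin.valEmbedding]
  congr 1
  ext j
  simp only [openSources, mem_filter, mem_range, mem_map, mem_univ, true_and,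
    Fin.valEmbedding_apply]
  constructor
  · rintro ⟨hj, h⟩
    exact ⟨⟨j, by omega⟩, ⟨hj, (forall_mem_permGraph_fst π ⟨j, by omega⟩ (t ≤ ·)).mp h⟩, rfl⟩
  · rintro ⟨j, ⟨hj, h⟩, rfl⟩
    exact ⟨hj, (forall_mem_permGraph_fst π j (t ≤ ·)).mpr h⟩

lemma heightAt_toPath (π : Equiv.Perm (Fin n)) {t : ℕ} (ht : t ≤ n) :
    heightAt (toPath π) t = #{j : Fin n | (j : ℕ) < t ∧ t ≤ π j} := by
  rw [toPath_eq_pathOf_permGraph, heightAt_pathOf_of_le (mem_partialPerms.mp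
    (permGraph_mem_partialPerms π)).2 ht, card_openSources_permGraph π ht]

lemma toPath_length (π : Equiv.Perm (Fin n)) : (toPath π).length = n := by
  simp [toPath]

lemma isMotzkin_toPath (π : Equiv.Perm (Fin n)) : IsMotzkin (toPath π) := by
  have hend : heightAt (toPath π) n = 0 := by
    rw [heightAt_toPath π le_rfl, Nat.cast_eq_zero, card_eq_zero, filter_eq_empty_iff]
    exact fun j _ h => (π j).isLt.not_ge h.2
  refine ⟨fun t => ?_, by rwa [toPath_length]⟩
  rcases le_total t n with h | h
  · rw [heightAt_toPath π h]
    positivity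
  · rw [heightAt_of_length_le _ (by rwa [toPath_length]), toPath_length, hend]

lemma sum_card_filter_lt_le_eq_sum_sub (π : Equiv.Perm (Fin n)) :
    ∑ t ∈ range (n + 1), #{j : Fin n | (j : ℕ) < t ∧ t ≤ π j} = ∑ j, ((π j : ℕ) - j) := by
  simp only [card_filter]
  rw [sum_comm]
  refine sum_congr rfl fun j _ => ?_
  rw [← card_filter, ← Nat.card_Ioc]
  congr 1
  ext t
  simp only [mem_filter, mem_range, mem_Ioc]
  have := (π j).isLt
  omega

lemma totalDisp_eq_two_mul_sum_sub (π : Equiv.Perm (Fin n)) :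
    totalDisp π = 2 * ∑ j, (((π j : ℕ) - j : ℕ) : ℤ) := by
  have hzero : ∑ j, (((π j : ℕ) : ℤ) - (j : ℕ)) = 0 := by
    rw [sum_sub_distrib, Equiv.sum_comp π (fun j => ((j : ℕ) : ℤ)), sub_self]
  rw [totalDisp, mul_sum, ← add_zero (∑ j, |_|), ← hzero, ← sum_add_distrib]
  refine sum_congr rfl fun j _ => ?_
  rcases le_total (j : ℕ) (π j : ℕ) with h | h
  · rw [abs_of_nonneg (by omega), Nat.cast_sub h]; ring
  · rw [abs_of_nonpos (by omega), Nat.sub_eq_zero_of_le h]; ring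

lemma two_mul_area_toPath (π : Equiv.Perm (Fin n)) : 2 * area (toPath π) = totalDisp π := by
  rw [totalDisp_eq_two_mul_sum_sub, area, toPath_length,
    sum_congr rfl fun t ht => heightAt_toPath π (Nat.lt_succ_iff.mp (mem_range.mp ht)),
    ← Nat.cast_sum, sum_card_filter_lt_le_eq_sum_sub, Nat.cast_sum]

lemma permGraph_injective : Function.Injective (permGraph (n := n)) := by
  intro π σ h
  ext j
  obtain ⟨k, -, hk⟩ := mem_image.mp (h ▸ mem_image_of_mem _ (mem_univ j) :
    ((j : ℕ), (π j : ℕ)) ∈ permGraph σ)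
  simp only [Prod.mk.injEq, Fin.val_inj] at hk
  rw [← hk.2, hk.1]

lemma exists_permGraph_eq {R : Finset (ℕ × ℕ)} (hR : R ∈ partialPerms n)
    (hopen : openSources R n = ∅) : ∃ π : Equiv.Perm (Fin n), permGraph π = R := by
  obtain ⟨hRn, hRp⟩ := mem_partialPerms.mp hR
  have hdom : ∀ j : Fin n, ∃ p ∈ R, p.1 = j := by
    intro j
    by_contra! h
    have := (mem_openSources_iff fun p hp => (hRn p hp).2).mpr ⟨j.isLt, h⟩
    simp [hopen] at this
  choose p hpR hp1 using hdom
  let f : Fin n → Fin n := fun j => ⟨(p j).2, (hRn _ (hpR j)).2⟩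
  have hf : Function.Injective f := fun j k h => Fin.ext <| by
    rw [← hp1 j, ← hp1 k]
    exact (hRp _ (hpR j) _ (hpR k)).2 (Fin.val_eq_of_eq h)
  refine ⟨Equiv.ofBijective f (Finite.injective_iff_bijective.mp hf), ?_⟩
  ext ⟨a, b⟩
  constructor
  · intro h
    obtain ⟨j, -, hj⟩ := mem_image.mp h
    rw [← hj]
    convert hpR j using 1
    exact Prod.ext (hp1 j).symm rfl
  · intro h
    have ha : a < n := (hRn _ h).1
    refine mem_image.mpr ⟨⟨a, ha⟩, mem_univ _, ?_⟩
    have := (hRp _ (hpR ⟨a, ha⟩) _ h).mp (hp1 _)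
    simp [f, this]

lemma card_toPath_fiber_eq_card_filter_pathOf {mz : List Move} (hmz : heightAt mz n = 0) :
    Nat.card {π : Equiv.Perm (Fin n) // toPath π = mz} =
      #{R ∈ partialPerms n | pathOf R n = mz} := by
  rw [Nat.card_eq_fintype_card, Fintype.card_subtype]
  refine card_bij (fun π _ => permGraph π) (fun π hπ => ?_)
    (fun π _ σ _ h => permGraph_injective h) (fun R hR => ?_)
  · rw [mem_filter, ← toPath_eq_pathOf_permGraph]
    exact ⟨permGraph_mem_partialPerms π, (mem_filter.mp hπ).2⟩
  · obtain ⟨hR, hpath⟩ := mem_filter.mp hR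
    have hopen : openSources R n = ∅ := by
      rw [← card_eq_zero, ← Nat.cast_eq_zero (R := ℤ), ← heightAt_pathOf hR, hpath, hmz]
    obtain ⟨π, rfl⟩ := exists_permGraph_eq hR hopen
    exact ⟨π, mem_filter.mpr ⟨mem_univ _, by rw [toPath_eq_pathOf_permGraph, hpath]⟩, rfl⟩

end Perm

/-- the word associated to a permutation `π` is a Motzkin path of width `n`
and area `D(π)/2`, and for every Motzkin path `mz` of width `n` the number of permutations
mapping to `mz` is exactly `ω(mz)`. -/
theorem toPath_is_motzkin_and_fiber_card (n : ℕ) :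
    (∀ π : Equiv.Perm (Fin n),
      (toPath π).length = n ∧ IsMotzkin (toPath π) ∧ 2 * area (toPath π) = totalDisp π) ∧
    (∀ mz : List Move, mz.length = n → IsMotzkin mz →
      (Nat.card {π : Equiv.Perm (Fin n) // toPath π = mz} : ℤ) = weight mz) := by
  refine ⟨fun π => ⟨toPath_length π, isMotzkin_toPath π, two_mul_area_toPath π⟩,
    fun mz hlen hmz => ?_⟩
  subst hlen
  rw [card_toPath_fiber_eq_card_filter_pathOf hmz.2, card_filter_pathOf_eq_prod_choicesAt,
    weight_eq_prod_choicesAt hmz, Nat.cast_prod]
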